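/- arXiv:1910.12504 — 7 statements merged into one kernel-verified Lean document; each statement's English description precedes it below -/
import Mathlib

section
/- Let w : Fin n × Fin 2 → ℕ with n ≥ 1. Suppose σ is the permutation of Fin n that matches the rows sorted in decreasing order of w(·,0) against the rows sorted in increasing order of w(·,1) (i.e., the k-th largest first-column value is paired with the k-th smallest second-column value). Then max_i (w(i,0) + w(σ(i),1)) is minimal among all permutations τ of Fin n, i.e., for every permutation τ, max_i (w(i,0) + w(σ(i),1)) ≤ max_i (w(i,0) + w(τ(i),1)). -/
/-- Optimality of the oppositely sorted pairing for two-column MBA. -/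
theorem stmt_3 (n : ℕ) (hn : 1 ≤ n) (w : Fin n × Fin 2 → ℕ) :
    ∀ τ : Equiv.Perm (Fin n),
      Finset.univ.sup (fun i : Fin n =>
          w (i, 0) + w (((Tuple.sort (fun i : Fin n => w (i, 0))).symm.trans
            (Fin.revPerm.trans (Tuple.sort (fun i : Fin n => w (i, 1))))) i, 1)) ≤
      Finset.univ.sup (fun i : Fin n => w (i, 0) + w (τ i, 1)) := by
  intro τ
  set a : Fin n → ℕ := fun i => w (i, 0) with ha
  set b : Fin n → ℕ := fun i => w (i, 1) with hb
  set σa := Tuple.sort a with hσa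
  set σb := Tuple.sort b with hσb
  apply Finset.sup_le
  intro i _
  set k := σa.symm i with hk
  have hik : i = σa k := by simp [hk]
  have hmonA : Monotone (a ∘ σa) := Tuple.monotone_sort a
  have hmonB : Monotone (b ∘ σb) := Tuple.monotone_sort b
  set S : Finset (Fin n) := Finset.univ.filter (fun j => a (σa k) ≤ a j) with hS
  set T : Finset (Fin n) := Finset.univ.filter (fun j => b (σb k.rev) ≤ b (τ j)) with hT
  have hScard : n - k.val ≤ S.card := by
    have hsub : (Finset.Ici k).image σa ⊆ S := by
      intro j hj
      simp only [Finset.mem_image, Finset.mem_Ici] at hj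
      obtain ⟨m, hm, rfl⟩ := hj
      simp only [hS, Finset.mem_filter, Finset.mem_univ, true_and]
      exact hmonA hm
    calc n - k.val = (Finset.Ici k).card := (Fin.card_Ici k).symm
      _ = ((Finset.Ici k).image σa).card :=
          (Finset.card_image_of_injective _ σa.injective).symm
      _ ≤ S.card := Finset.card_le_card hsub
  have hTcard : k.val + 1 ≤ T.card := by
    have hsub : (Finset.Ici k.rev).image (fun m => τ.symm (σb m)) ⊆ T := by
      intro j hj
      simp only [Finset.mem_image, Finset.mem_Ici] at hj
      obtain ⟨m, hm, rfl⟩ := hj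
      simp only [hT, Finset.mem_filter, Finset.mem_univ, true_and,
        Equiv.apply_symm_apply]
      exact hmonB hm
    have hinj : Function.Injective (fun m : Fin n => τ.symm (σb m)) :=
      τ.symm.injective.comp σb.injective
    have hrev : (Finset.Ici k.rev).card = k.val + 1 := by
      rw [Fin.card_Ici, Fin.val_rev]
      have := k.isLt
      omega
    calc k.val + 1 = ((Finset.Ici k.rev).image (fun m => τ.symm (σb m))).card := by
          rw [Finset.card_image_of_injective _ hinj, hrev]
      _ ≤ T.card := Finset.card_le_card hsub
  have hinter : (S ∩ T).Nonempty := by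
    rw [← Finset.card_pos]
    have hu : (S ∪ T).card ≤ n := by
      simpa using Finset.card_le_card (Finset.subset_univ (S ∪ T))
    have := Finset.card_inter_add_card_union S T
    have hkn := k.isLt
    omega
  obtain ⟨j, hj⟩ := hinter
  rw [Finset.mem_inter, hS, hT, Finset.mem_filter, Finset.mem_filter] at hj
  have hle : a (σa k) + b (σb k.rev) ≤ a j + b (τ j) :=
    Nat.add_le_add hj.1.2 hj.2.2
  have hterm : w (i, 0) + w (((Tuple.sort (fun i : Fin n => w (i, 0))).symm.trans
      (Fin.revPerm.trans (Tuple.sort (fun i : Fin n => w (i, 1))))) i, 1)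
      = a (σa k) + b (σb k.rev) := by
    simp [ha, hb, hσa, hσb, hik, Equiv.trans_apply]
  rw [hterm]
  exact le_trans hle (Finset.le_sup (f := fun i : Fin n => w (i, 0) + w (τ i, 1))
    (Finset.mem_univ j))
end

section
/- For sequences a, b : Fin n → ℕ, the minimum over permutations τ of max_i (a(i) + b(τ(i))) equals max over k ∈ Fin n of (a^↓(k) + b^↑(k)), where a^↓ is a sorted in decreasing order and b^↑ is b sorted in increasing order. -/
open Finset

lemma sup_perm {n : ℕ} (f : Fin n → ℕ) (σ : Equiv.Perm (Fin n)) :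
    univ.sup (fun i => f (σ i)) = univ.sup f := by
  apply le_antisymm
  · exact Finset.sup_le fun j _ => Finset.le_sup (mem_univ (σ j))
  · refine Finset.sup_le fun j _ => ?_
    have := Finset.le_sup (f := fun i => f (σ i)) (mem_univ (σ.symm j))
    simpa using this

lemma bottleneck_lb {n : ℕ} (a b : Fin n → ℕ) (τ : Equiv.Perm (Fin n)) (k : Fin n) :
    a (Tuple.sort a (Fin.revPerm k)) + b (Tuple.sort b k) ≤
      univ.sup (fun i : Fin n => a i + b (τ i)) := by
  set A : Finset (Fin n) := (Finset.Ici (Fin.revPerm k)).image (fun j => τ (Tuple.sort a j))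
    with hA
  set B : Finset (Fin n) := (Finset.Ici k).image (Tuple.sort b) with hB
  have hinj : Function.Injective fun j => τ (Tuple.sort a j) :=
    fun x y h => (Equiv.injective _) ((Equiv.injective τ) h)
  have hcardA : A.card = k + 1 := by
    rw [hA, Finset.card_image_of_injective _ hinj, Fin.card_Ici]
    simp only [Fin.revPerm_apply, Fin.val_rev]
    omega
  have hcardB : B.card = n - k := by
    rw [hB, Finset.card_image_of_injective _ (Equiv.injective _), Fin.card_Ici]
  have hinter : (A ∩ B).Nonempty := by
    rw [← Finset.card_pos]
    have h1 := Finset.card_inter_add_card_union A B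
    have h2 : (A ∪ B).card ≤ n := by
      simpa using Finset.card_le_card (Finset.subset_univ (A ∪ B))
    have hk : (k : ℕ) < n := k.isLt
    omega
  obtain ⟨x, hx⟩ := hinter
  rw [Finset.mem_inter] at hx
  obtain ⟨hxA, hxB⟩ := hx
  rw [hA, Finset.mem_image] at hxA
  rw [hB, Finset.mem_image] at hxB
  obtain ⟨j, hj, rfl⟩ := hxA
  obtain ⟨j', hj', hj'x⟩ := hxB
  rw [Finset.mem_Ici] at hj hj'
  have ha : a (Tuple.sort a (Fin.revPerm k)) ≤ a (Tuple.sort a j) :=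
    Tuple.monotone_sort a hj
  have hb : b (Tuple.sort b k) ≤ b (τ (Tuple.sort a j)) := by
    rw [← hj'x]; exact Tuple.monotone_sort b hj'
  calc a (Tuple.sort a (Fin.revPerm k)) + b (Tuple.sort b k)
      ≤ a (Tuple.sort a j) + b (τ (Tuple.sort a j)) := add_le_add ha hb
    _ ≤ _ := Finset.le_sup (f := fun i => a i + b (τ i)) (mem_univ (Tuple.sort a j))

/-- Closed form for the two-column bottleneck assignment with sum costs. -/
theorem stmt_6 (n : ℕ) (a b : Fin n → ℕ) :
    sInf {v | ∃ τ : Equiv.Perm (Fin n),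
        v = Finset.univ.sup (fun i : Fin n => a i + b (τ i))} =
      Finset.univ.sup (fun k : Fin n =>
        a (Tuple.sort a (Fin.revPerm k)) + b (Tuple.sort b k)) := by
  apply le_antisymm
  · -- sInf ≤ RHS: exhibit the permutation
    apply Nat.sInf_le
    refine ⟨(((Tuple.sort a).symm.trans Fin.revPerm).trans (Tuple.sort b)), ?_⟩
    have h1 : Finset.univ.sup (fun k : Fin n =>
        a (Tuple.sort a (Fin.revPerm k)) + b (Tuple.sort b k)) =
        Finset.univ.sup (fun i : Fin n =>
          a i + b ((((Tuple.sort a).symm.trans Fin.revPerm).trans (Tuple.sort b)) i)) := by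
      rw [← sup_perm (fun k : Fin n =>
          a (Tuple.sort a (Fin.revPerm k)) + b (Tuple.sort b k)) Fin.revPerm,
        ← sup_perm (fun i : Fin n =>
          a i + b ((((Tuple.sort a).symm.trans Fin.revPerm).trans (Tuple.sort b)) i))
          (Tuple.sort a)]
      refine Finset.sup_congr rfl fun j _ => ?_
      simp [Fin.rev_rev]
    exact h1
  · -- RHS ≤ sInf
    have hne : {v | ∃ τ : Equiv.Perm (Fin n),
        v = Finset.univ.sup (fun i : Fin n => a i + b (τ i))}.Nonempty :=
      ⟨_, 1, rfl⟩
    obtain ⟨τ, hτ⟩ := Nat.sInf_mem hne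
    rw [hτ]
    exact Finset.sup_le fun k _ => bottleneck_lb a b τ k
end

section
/- Let T ⊆ X × Y × Z be a set of triples over finite sets X, Y, Z each of size q, with p = |T| ≥ q. Consider the bipartite 'flow' structure: Z-nodes (one per z ∈ Z) and Y-nodes (#occ(y)−1 copies per y ∈ Y, total p−q nodes) on the left, T-nodes (one per triple) in the middle, X-nodes (one per x ∈ X) and p−q dummy nodes on the right; z is joined to triples containing z, y-copies joined to triples containing y, triple t = (x,y,z) joined to x, and every triple joined to every dummy. Then T contains a perfect 3-dimensional matching of X, Y, Z if and only if there exists a system of vertex-disjoint paths through the T-nodes covering all left nodes and all right nodes such that every Z-node is routed to an X-node. -/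
private lemma filter_card_one_of_existsUnique {α : Type*} (s : Finset α) (p : α → Prop)
    [DecidablePred p] (h : ∃! a, a ∈ s ∧ p a) : (s.filter p).card = 1 := by
  obtain ⟨a, ⟨ha, hpa⟩, hu⟩ := h
  rw [Finset.card_eq_one]
  refine ⟨a, ?_⟩
  ext b
  simp only [Finset.mem_filter, Finset.mem_singleton]
  exact ⟨fun hb => hu b hb, fun hb => hb ▸ ⟨ha, hpa⟩⟩

/-- Lemma 2: a 3DM instance is a YES instance iff in the gadget there is a
system of vertex-disjoint paths routing every `Z`-node to an `X`-node. -/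
theorem stmt_9 (X Y Z : Type) [Fintype X] [Fintype Y] [Fintype Z]
    [DecidableEq X] [DecidableEq Y] [DecidableEq Z]
    (q p : ℕ) (hX : Fintype.card X = q) (hY : Fintype.card Y = q) (hZ : Fintype.card Z = q)
    (T : Finset (X × Y × Z)) (hT : T.card = p) (hqp : q ≤ p)
    (hocc : ∀ y : Y, 1 ≤ (T.filter (fun t => t.2.1 = y)).card) :
    (∃ T' ⊆ T,
        (∀ x : X, ∃! t, t ∈ T' ∧ t.1 = x) ∧
        (∀ y : Y, ∃! t, t ∈ T' ∧ t.2.1 = y) ∧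
        (∀ z : Z, ∃! t, t ∈ T' ∧ t.2.2 = z)) ↔
    (∃ (M₁ : (Z ⊕ (Σ y : Y, Fin ((T.filter (fun t => t.2.1 = y)).card - 1))) ≃ {t // t ∈ T})
       (M₂ : {t // t ∈ T} ≃ (X ⊕ Fin (p - q))),
        (∀ z : Z, ((M₁ (Sum.inl z)).val).2.2 = z) ∧
        (∀ yc : Σ y : Y, Fin ((T.filter (fun t => t.2.1 = y)).card - 1),
            ((M₁ (Sum.inr yc)).val).2.1 = yc.1) ∧
        (∀ (t : {t // t ∈ T}) (x : X), M₂ t = Sum.inl x → (t.val).1 = x) ∧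
        (∀ z : Z, ∃ x : X, M₂ (M₁ (Sum.inl z)) = Sum.inl x)) := by
  constructor
  · rintro ⟨T', hsub, hx, hy, hz⟩
    have hy1 : ∀ y : Y, (T'.filter (fun t => t.2.1 = y)).card = 1 := fun y =>
      filter_card_one_of_existsUnique _ _ (hy y)
    have hT'card : T'.card = q := by
      rw [Finset.card_eq_sum_card_fiberwise (f := fun t => t.2.1) (t := Finset.univ)
        (fun x _ => Finset.mem_univ _)]
      simp [hy1, ← hY]
    have hA : ∀ y : Y, ((T \ T').filter (fun t => t.2.1 = y)).card
        = (T.filter (fun t => t.2.1 = y)).card - 1 := by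
      intro y
      have heq : (T \ T').filter (fun t => t.2.1 = y)
          = T.filter (fun t => t.2.1 = y) \ T'.filter (fun t => t.2.1 = y) := by
        ext t
        simp only [Finset.mem_filter, Finset.mem_sdiff]
        tauto
      rw [heq, Finset.card_sdiff_of_subset (Finset.filter_subset_filter _ hsub), hy1 y]
    have hD : (T \ T').card = p - q := by
      rw [Finset.card_sdiff_of_subset hsub, hT'card, hT]
    -- Z ≃ T'
    have hfZ : Function.Bijective (fun t : {t // t ∈ T'} => t.val.2.2) := by
      constructor
      · rintro ⟨a, ha⟩ ⟨b, hb⟩ hab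
        simp only at hab
        obtain ⟨t, -, hu⟩ := hz a.2.2
        simp only [Subtype.mk.injEq]
        rw [hu a ⟨ha, rfl⟩, hu b ⟨hb, hab.symm⟩]
      · intro z
        obtain ⟨t, ⟨ht, htz⟩, -⟩ := hz z
        exact ⟨⟨t, ht⟩, htz⟩
    have hfX : Function.Bijective (fun t : {t // t ∈ T'} => t.val.1) := by
      constructor
      · rintro ⟨a, ha⟩ ⟨b, hb⟩ hab
        simp only at hab
        obtain ⟨t, -, hu⟩ := hx a.1
        simp only [Subtype.mk.injEq]
        rw [hu a ⟨ha, rfl⟩, hu b ⟨hb, hab.symm⟩]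
      · intro x
        obtain ⟨t, ⟨ht, htx⟩, -⟩ := hx x
        exact ⟨⟨t, ht⟩, htx⟩
    let e1 : Z ≃ {t // t ∈ T'} := (Equiv.ofBijective _ hfZ).symm
    let eX : {t // t ∈ T'} ≃ X := Equiv.ofBijective _ hfX
    let eD : {t // t ∈ T \ T'} ≃ Fin (p - q) := Finset.equivFinOfCardEq hD
    let g : ∀ y : Y, Fin ((T.filter (fun t => t.2.1 = y)).card - 1)
        ≃ {t // t ∈ (T \ T').filter (fun t => t.2.1 = y)} :=
      fun y => (Finset.equivFinOfCardEq (hA y)).symm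
    let F : (Σ y : Y, Fin ((T.filter (fun t => t.2.1 = y)).card - 1)) → {t // t ∈ T \ T'} :=
      fun yc => ⟨(g yc.1 yc.2).val, (Finset.mem_filter.1 (g yc.1 yc.2).prop).1⟩
    have hFy : ∀ yc, (F yc).val.2.1 = yc.1 := fun yc =>
      (Finset.mem_filter.1 (g yc.1 yc.2).prop).2
    have hF : Function.Bijective F := by
      constructor
      · rintro ⟨y1, i1⟩ ⟨y2, i2⟩ h
        have hv : ((g y1 i1).val : X × Y × Z) = (g y2 i2).val := congrArg Subtype.val h
        have hy12 : y1 = y2 := by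
          have e1 := (Finset.mem_filter.1 (g y1 i1).prop).2
          have e2 := (Finset.mem_filter.1 (g y2 i2).prop).2
          rw [← e1, ← e2, hv]
        subst hy12
        have h2 : (g y1 i1) = (g y1 i2) := Subtype.ext hv
        have h3 : i1 = i2 := (g y1).injective h2
        exact congrArg _ h3
      · rintro ⟨t, ht⟩
        have htA : t ∈ (T \ T').filter (fun t => t.2.1 = t.2.1) := by
          exact Finset.mem_filter.2 ⟨ht, rfl⟩
        refine ⟨⟨t.2.1, (g t.2.1).symm ⟨t, Finset.mem_filter.2 ⟨ht, rfl⟩⟩⟩, ?_⟩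
        apply Subtype.ext
        show ((g t.2.1) ((g t.2.1).symm ⟨t, _⟩)).val = t
        rw [Equiv.apply_symm_apply]
    let e2 := Equiv.ofBijective F hF
    let G : ({t // t ∈ T'} ⊕ {t // t ∈ T \ T'}) → {t // t ∈ T} := fun s =>
      match s with
      | Sum.inl t => ⟨t.val, hsub t.prop⟩
      | Sum.inr t => ⟨t.val, (Finset.mem_sdiff.1 t.prop).1⟩
    have hG : Function.Bijective G := by
      constructor
      · rintro (a | a) (b | b) h <;>
          simp only [G, Subtype.mk.injEq] at h
        · exact congrArg Sum.inl (Subtype.ext h)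
        · exact absurd (h ▸ a.prop) (fun hc => (Finset.mem_sdiff.1 b.prop).2 hc)
        · exact absurd (h ▸ b.prop) (fun hc => (Finset.mem_sdiff.1 a.prop).2 hc)
        · exact congrArg Sum.inr (Subtype.ext h)
      · rintro ⟨t, ht⟩
        by_cases h : t ∈ T'
        · exact ⟨Sum.inl ⟨t, h⟩, rfl⟩
        · exact ⟨Sum.inr ⟨t, Finset.mem_sdiff.2 ⟨ht, h⟩⟩, rfl⟩
    let e0 := Equiv.ofBijective G hG
    refine ⟨(Equiv.sumCongr e1 e2).trans e0, e0.symm.trans (Equiv.sumCongr eX eD),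
      ?_, ?_, ?_, ?_⟩
    · intro z
      show ((e1 z).val).2.2 = z
      exact (Equiv.ofBijective _ hfZ).apply_symm_apply z
    · intro yc
      exact hFy yc
    · intro t x hxval
      have ht : t = e0 (e0.symm t) := (e0.apply_symm_apply t).symm
      rcases hse : e0.symm t with a | a
      · have h2 : (e0.symm.trans (Equiv.sumCongr eX eD)) t = Sum.inl (eX a) := by
          show (Equiv.sumCongr eX eD) (e0.symm t) = _
          rw [hse]; rfl
        rw [h2] at hxval
        have hxa : eX a = x := Sum.inl.inj hxval
        rw [hse] at ht
        have hv : t.val = a.val := congrArg Subtype.val ht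
        rw [hv, ← hxa]
        rfl
      · have h2 : (e0.symm.trans (Equiv.sumCongr eX eD)) t = Sum.inr (eD a) := by
          show (Equiv.sumCongr eX eD) (e0.symm t) = _
          rw [hse]; rfl
        rw [h2] at hxval
        simp at hxval
    · intro z
      refine ⟨eX (e1 z), ?_⟩
      show (Equiv.sumCongr eX eD) (e0.symm (e0 (Sum.inl (e1 z)))) = Sum.inl (eX (e1 z))
      rw [e0.symm_apply_apply]
      rfl
  · rintro ⟨M₁, M₂, hM1z, hM1y, hM2x, hroute⟩
    set T' : Finset (X × Y × Z) :=
      Finset.image (fun z => (M₁ (Sum.inl z)).val) Finset.univ with hT'def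
    have hinj : Function.Injective (fun z : Z => (M₁ (Sum.inl z)).val) := by
      intro a b h
      have := Subtype.ext h
      have := M₁.injective this
      exact Sum.inl.inj this
    have hsub : T' ⊆ T := by
      intro t ht
      obtain ⟨z, -, rfl⟩ := Finset.mem_image.1 ht
      exact (M₁ (Sum.inl z)).prop
    have hT'card : T'.card = q := by
      rw [hT'def, Finset.card_image_of_injective _ hinj, Finset.card_univ, hZ]
    -- routing along x
    have hxz : ∀ z : Z, M₂ (M₁ (Sum.inl z)) = Sum.inl ((M₁ (Sum.inl z)).val.1) := by
      intro z
      obtain ⟨x, hx⟩ := hroute z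
      have h1 := hM2x _ x hx
      rw [hx, h1]
    have hψ : Function.Bijective (fun z : Z => (M₁ (Sum.inl z)).val.1) := by
      rw [Fintype.bijective_iff_injective_and_card]
      refine ⟨?_, by rw [hZ, hX]⟩
      intro a b h
      have h2 : M₂ (M₁ (Sum.inl a)) = M₂ (M₁ (Sum.inl b)) := by
        rw [hxz a, hxz b]
        exact congrArg Sum.inl h
      exact Sum.inl.inj (M₁.injective (M₂.injective h2))
    -- at most one triple of T' per y-value
    have hle1 : ∀ y : Y, (T'.filter (fun t => t.2.1 = y)).card ≤ 1 := by
      intro y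
      rw [Finset.card_le_one]
      intro a ha b hb
      by_contra hne
      obtain ⟨haT', hay⟩ := Finset.mem_filter.1 ha
      obtain ⟨hbT', hby⟩ := Finset.mem_filter.1 hb
      obtain ⟨z1, -, rfl⟩ := Finset.mem_image.1 haT'
      obtain ⟨z2, -, rfl⟩ := Finset.mem_image.1 hbT'
      set S : Finset (X × Y × Z) :=
        insert (M₁ (Sum.inl z1)).val (insert (M₁ (Sum.inl z2)).val
          (Finset.image
            (fun i : Fin ((T.filter (fun t => t.2.1 = y)).card - 1) =>
              (M₁ (Sum.inr ⟨y, i⟩)).val) Finset.univ)) with hSdef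
      have hinj2 : Function.Injective
          (fun i : Fin ((T.filter (fun t => t.2.1 = y)).card - 1) =>
            (M₁ (Sum.inr ⟨y, i⟩)).val) := by
        intro i j h
        have := M₁.injective (Subtype.ext h)
        have := Sum.inr.inj this
        exact sigma_mk_injective (i := y) this
      have hnotmem : ∀ z : Z, (M₁ (Sum.inl z)).val ∉
          Finset.image
            (fun i : Fin ((T.filter (fun t => t.2.1 = y)).card - 1) =>
              (M₁ (Sum.inr ⟨y, i⟩)).val) Finset.univ := by
        intro z hmem
        obtain ⟨i, -, hi⟩ := Finset.mem_image.1 hmem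
        have := M₁.injective (Subtype.ext hi)
        simp at this
      have hScard : S.card = (T.filter (fun t => t.2.1 = y)).card + 1 := by
        rw [hSdef, Finset.card_insert_of_notMem, Finset.card_insert_of_notMem,
          Finset.card_image_of_injective _ hinj2, Finset.card_univ, Fintype.card_fin]
        · have := hocc y
          omega
        · exact hnotmem z2
        · simp only [Finset.mem_insert]
          push_neg
          exact ⟨hne, hnotmem z1⟩
      have hSsub : S ⊆ T.filter (fun t => t.2.1 = y) := by
        intro t ht
        rw [hSdef] at ht
        simp only [Finset.mem_insert] at ht
        rcases ht with rfl | rfl | ht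
        · exact Finset.mem_filter.2 ⟨(M₁ (Sum.inl z1)).prop, hay⟩
        · exact Finset.mem_filter.2 ⟨(M₁ (Sum.inl z2)).prop, hby⟩
        · obtain ⟨i, -, rfl⟩ := Finset.mem_image.1 ht
          exact Finset.mem_filter.2 ⟨(M₁ (Sum.inr ⟨y, i⟩)).prop, hM1y ⟨y, i⟩⟩
      have := Finset.card_le_card hSsub
      omega
    -- hence exactly one per y-value
    have heq1 : ∀ y : Y, (T'.filter (fun t => t.2.1 = y)).card = 1 := by
      intro y₀
      by_contra hne
      have h0 : (T'.filter (fun t => t.2.1 = y₀)).card = 0 := by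
        have := hle1 y₀; omega
      have hsum : T'.card = ∑ y ∈ Finset.univ,
          (T'.filter (fun t => t.2.1 = y)).card :=
        Finset.card_eq_sum_card_fiberwise (fun x _ => Finset.mem_univ _)
      have hsplit : (T'.filter (fun t => t.2.1 = y₀)).card
          + ∑ y ∈ Finset.univ.erase y₀, (T'.filter (fun t => t.2.1 = y)).card
          = ∑ y ∈ Finset.univ, (T'.filter (fun t => t.2.1 = y)).card :=
        Finset.add_sum_erase _ (fun y => (T'.filter (fun t => t.2.1 = y)).card) (Finset.mem_univ y₀)
      have hbound : ∑ y ∈ Finset.univ.erase y₀, (T'.filter (fun t => t.2.1 = y)).card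
          ≤ (Finset.univ.erase y₀).card • 1 :=
        Finset.sum_le_card_nsmul _ _ _ (fun x _ => hle1 x)
      have hcarde : (Finset.univ.erase y₀).card = q - 1 := by
        rw [Finset.card_erase_of_mem (Finset.mem_univ y₀), Finset.card_univ, hY]
      have hq1 : 1 ≤ q := by
        rw [← hY]
        exact Fintype.card_pos_iff.2 ⟨y₀⟩
      rw [hcarde, smul_eq_mul, mul_one] at hbound
      omega
    refine ⟨T', hsub, ?_, ?_, ?_⟩
    · intro x
      obtain ⟨z, hzx⟩ := hψ.2 x
      refine ⟨(M₁ (Sum.inl z)).val, ⟨Finset.mem_image.2 ⟨z, Finset.mem_univ z, rfl⟩, hzx⟩, ?_⟩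
      rintro t ⟨htT', htx⟩
      obtain ⟨z', -, rfl⟩ := Finset.mem_image.1 htT'
      have : z' = z := hψ.1 (htx.trans hzx.symm)
      rw [this]
    · intro y
      obtain ⟨t, hts⟩ := Finset.card_eq_one.1 (heq1 y)
      have htmem : t ∈ T'.filter (fun t => t.2.1 = y) := hts ▸ Finset.mem_singleton_self t
      obtain ⟨htT', hty⟩ := Finset.mem_filter.1 htmem
      refine ⟨t, ⟨htT', hty⟩, ?_⟩
      rintro t' ⟨ht'T', ht'y⟩
      have : t' ∈ T'.filter (fun t => t.2.1 = y) := Finset.mem_filter.2 ⟨ht'T', ht'y⟩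
      rw [hts] at this
      exact Finset.mem_singleton.1 this
    · intro z
      refine ⟨(M₁ (Sum.inl z)).val,
        ⟨Finset.mem_image.2 ⟨z, Finset.mem_univ z, rfl⟩, hM1z z⟩, ?_⟩
      rintro t ⟨htT', htz⟩
      obtain ⟨z', -, rfl⟩ := Finset.mem_image.1 htT'
      have : z' = z := by rw [← hM1z z', htz]
      rw [this]
end

section
/- Let w : Fin n × Fin m → ℕ and consider a feasible MBA solution given by permutations σ_j with value V = max_k Σ_j w(σ_j(k), j). Then the post-optimization step that, for any fixed column boundary j, re-matches the prefix sums P_k = Σ_{j' ≤ j} w(σ_{j'}(k), j') against the suffix sums S_k = Σ_{j' > j} w(σ_{j'}(k), j') by pairing P sorted decreasingly with S sorted increasingly, yields a feasible solution of value at most V. -/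
lemma aux_rematch (n : ℕ) (P S : Fin n → ℕ) :
    Finset.univ.sup (fun k : Fin n =>
      P k + S (((Tuple.sort P).symm.trans (Fin.revPerm.trans (Tuple.sort S))) k)) ≤
    Finset.univ.sup (fun k : Fin n => P k + S k) := by
  apply Finset.sup_le
  intro k _
  set i := (Tuple.sort P).symm k with hi
  have hk : k = Tuple.sort P i := by simp [hi]
  have hσ : ((Tuple.sort P).symm.trans (Fin.revPerm.trans (Tuple.sort S))) k
      = Tuple.sort S i.rev := rfl
  set A := (Finset.univ.filter (fun l : Fin n => i ≤ l)).image (Tuple.sort P) with hA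
  set B := (Finset.univ.filter (fun l : Fin n => i.rev ≤ l)).image (Tuple.sort S) with hB
  have hfilt : ∀ c : Fin n, Finset.univ.filter (fun l : Fin n => c ≤ l) = Finset.Ici c := by
    intro c; ext l; simp
  have hcardA : A.card = n - i := by
    rw [hA, Finset.card_image_of_injective _ (Tuple.sort P).injective, hfilt, Fin.card_Ici]
  have hcardB : B.card = n - i.rev := by
    rw [hB, Finset.card_image_of_injective _ (Tuple.sort S).injective, hfilt, Fin.card_Ici]
  have hnonempty : (A ∩ B).Nonempty := by
    by_contra h
    rw [Finset.not_nonempty_iff_eq_empty] at h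
    have hdisj : Disjoint A B := Finset.disjoint_iff_inter_eq_empty.mpr h
    have hle : (A ∪ B).card ≤ (Finset.univ : Finset (Fin n)).card := Finset.card_le_card
      (Finset.subset_univ _)
    rw [Finset.card_union_of_disjoint hdisj, hcardA, hcardB, Finset.card_univ,
      Fintype.card_fin] at hle
    have h1 : (i : ℕ) < n := i.isLt
    have h2 : (i.rev : ℕ) = n - (i + 1) := Fin.val_rev i
    omega
  obtain ⟨k0, hk0⟩ := hnonempty
  rw [Finset.mem_inter] at hk0
  obtain ⟨hk0A, hk0B⟩ := hk0
  rw [hA, Finset.mem_image] at hk0A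
  rw [hB, Finset.mem_image] at hk0B
  obtain ⟨l, hl, hlk⟩ := hk0A
  obtain ⟨l', hl', hlk'⟩ := hk0B
  rw [Finset.mem_filter] at hl hl'
  have hP : P k ≤ P k0 := by
    rw [hk, ← hlk]; exact Tuple.monotone_sort P hl.2
  have hS : S (Tuple.sort S i.rev) ≤ S k0 := by
    rw [← hlk']; exact Tuple.monotone_sort S hl'.2
  calc P k + S (((Tuple.sort P).symm.trans (Fin.revPerm.trans (Tuple.sort S))) k)
      = P k + S (Tuple.sort S i.rev) := by rw [hσ]
    _ ≤ P k0 + S k0 := add_le_add hP hS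
    _ ≤ _ := Finset.le_sup (f := fun k : Fin n => P k + S k) (Finset.mem_univ k0)

/-- Post-optimization: re-matching prefix sums against suffix sums at any fixed
column boundary, with prefix sums sorted decreasingly paired against suffix sums
sorted increasingly, never increases the objective value. -/
theorem stmt_11 (n m : ℕ) (w : Fin n × Fin m → ℕ)
    (σ : Fin m → Equiv.Perm (Fin n)) (j : Fin m) :
    let P : Fin n → ℕ := fun k => ∑ j' ∈ Finset.univ.filter (fun j' : Fin m => j' ≤ j), w (σ j' k, j')
    let S : Fin n → ℕ := fun k => ∑ j' ∈ Finset.univ.filter (fun j' : Fin m => j < j'), w (σ j' k, j')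
    let σ' : Equiv.Perm (Fin n) := (Tuple.sort P).symm.trans (Fin.revPerm.trans (Tuple.sort S))
    let τ : Fin m → Equiv.Perm (Fin n) := fun j' => if j' ≤ j then σ j' else σ'.trans (σ j')
    Finset.univ.sup (fun k : Fin n => ∑ j' : Fin m, w (τ j' k, j')) ≤
      Finset.univ.sup (fun k : Fin n => ∑ j' : Fin m, w (σ j' k, j')) := by
  intro P S σ' τ
  have hsplit : ∀ f : Fin m → ℕ, ∑ j' : Fin m, f j' =
      (∑ j' ∈ Finset.univ.filter (fun j' : Fin m => j' ≤ j), f j') +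
      (∑ j' ∈ Finset.univ.filter (fun j' : Fin m => j < j'), f j') := by
    intro f
    rw [← Finset.sum_filter_add_sum_filter_not Finset.univ (fun j' : Fin m => j' ≤ j)]
    congr 1
    apply Finset.sum_congr _ (fun _ _ => rfl)
    ext j'; simp [not_le]
  have hτ : ∀ k, (∑ j' : Fin m, w (τ j' k, j')) = P k + S (σ' k) := by
    intro k
    rw [hsplit (fun j' => w (τ j' k, j'))]
    congr 1
    · apply Finset.sum_congr rfl
      intro j' hj'
      rw [Finset.mem_filter] at hj'
      simp [τ, hj'.2]
    · apply Finset.sum_congr rfl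
      intro j' hj'
      rw [Finset.mem_filter] at hj'
      simp [τ, not_le.mpr hj'.2, S]
  have hσs : ∀ k, (∑ j' : Fin m, w (σ j' k, j')) = P k + S k := by
    intro k; rw [hsplit (fun j' => w (σ j' k, j'))]
  simp only [hτ, hσs]
  exact aux_rematch n P S
end

section
/- If a 3DM instance is a YES instance, then in the single-gadget construction (Z-sub-block and Y-sub-block connected to a T-sub-block, connected to an X-sub-block and a dummy sub-block of size p−q), there exists a pair of compatible perfect matchings in which every Z-node is matched through the T-sub-block to an X-node, and every Y-node is matched through the T-sub-block to a dummy node. -/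
/-- Forward direction of Lemma 2: a YES 3DM instance yields compatible perfect
matchings routing every `Z`-node to an `X`-node and every `Y`-node to a dummy. -/
theorem stmt_12 (X Y Z : Type) [Fintype X] [Fintype Y] [Fintype Z]
    [DecidableEq X] [DecidableEq Y] [DecidableEq Z]
    (q p : ℕ) (hX : Fintype.card X = q) (hY : Fintype.card Y = q) (hZ : Fintype.card Z = q)
    (T : Finset (X × Y × Z)) (hT : T.card = p) (hqp : q ≤ p)
    (hocc : ∀ y : Y, 1 ≤ (T.filter (fun t => t.2.1 = y)).card)
    (hYES : ∃ T' ⊆ T,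
        (∀ x : X, ∃! t, t ∈ T' ∧ t.1 = x) ∧
        (∀ y : Y, ∃! t, t ∈ T' ∧ t.2.1 = y) ∧
        (∀ z : Z, ∃! t, t ∈ T' ∧ t.2.2 = z)) :
    ∃ (M₁ : (Z ⊕ (Σ y : Y, Fin ((T.filter (fun t => t.2.1 = y)).card - 1))) ≃ {t // t ∈ T})
      (M₂ : {t // t ∈ T} ≃ (X ⊕ Fin (p - q))),
        (∀ z : Z, ((M₁ (Sum.inl z)).val).2.2 = z) ∧
        (∀ yc : Σ y : Y, Fin ((T.filter (fun t => t.2.1 = y)).card - 1),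
            ((M₁ (Sum.inr yc)).val).2.1 = yc.1) ∧
        (∀ (t : {t // t ∈ T}) (x : X), M₂ t = Sum.inl x → (t.val).1 = x) ∧
        (∀ z : Z, ∃ x : X, M₂ (M₁ (Sum.inl z)) = Sum.inl x) ∧
        (∀ yc : Σ y : Y, Fin ((T.filter (fun t => t.2.1 = y)).card - 1),
            ∃ d : Fin (p - q), M₂ (M₁ (Sum.inr yc)) = Sum.inr d) := by
  classical
  obtain ⟨T', hsub, hx, hy, hz⟩ := hYES
  -- Z ≃ T'
  have hZbij : Function.Bijective (fun t : {t // t ∈ T'} => t.val.2.2) := by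
    constructor
    · rintro ⟨t1, h1⟩ ⟨t2, h2⟩ h
      simp only at h
      obtain ⟨t0, -, hu⟩ := hz t1.2.2
      have e1 := hu t1 ⟨h1, rfl⟩
      have e2 := hu t2 ⟨h2, h.symm⟩
      simp [Subtype.ext_iff, e1, e2]
    · intro z
      obtain ⟨t0, ⟨ht0, hz0⟩, -⟩ := hz z
      exact ⟨⟨t0, ht0⟩, hz0⟩
  set e_Z : Z ≃ {t // t ∈ T'} := (Equiv.ofBijective _ hZbij).symm with he_Z
  -- T' ≃ X
  have hXbij : Function.Bijective (fun t : {t // t ∈ T'} => t.val.1) := by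
    constructor
    · rintro ⟨t1, h1⟩ ⟨t2, h2⟩ h
      simp only at h
      obtain ⟨t0, -, hu⟩ := hx t1.1
      have e1 := hu t1 ⟨h1, rfl⟩
      have e2 := hu t2 ⟨h2, h.symm⟩
      simp [Subtype.ext_iff, e1, e2]
    · intro x
      obtain ⟨t0, ⟨ht0, hx0⟩, -⟩ := hx x
      exact ⟨⟨t0, ht0⟩, hx0⟩
  set e_X : {t // t ∈ T'} ≃ X := Equiv.ofBijective _ hXbij with he_X
  -- card of T'
  have hT'card : T'.card = q := by
    have := Fintype.card_congr e_X
    rwa [Fintype.card_coe, hX] at this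
  have hsd : (T \ T').card = p - q := by
    rw [Finset.card_sdiff_of_subset hsub, hT, hT'card]
  -- fibers of T \ T' over Y
  have hfilter1 : ∀ y : Y, (T'.filter (fun t => t.2.1 = y)).card = 1 := by
    intro y
    obtain ⟨t0, ⟨ht0, hy0⟩, hu⟩ := hy y
    rw [Finset.card_eq_one]
    refine ⟨t0, ?_⟩
    ext a
    simp only [Finset.mem_filter, Finset.mem_singleton]
    constructor
    · rintro ⟨ha, hay⟩; exact hu a ⟨ha, hay⟩
    · rintro rfl; exact ⟨ht0, hy0⟩
  have hfibcard : ∀ y : Y,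
      Fintype.card {t : {t // t ∈ T \ T'} // t.val.2.1 = y}
        = (T.filter (fun t => t.2.1 = y)).card - 1 := by
    intro y
    have e : {t : {t // t ∈ T \ T'} // t.val.2.1 = y}
        ≃ {t // t ∈ (T \ T').filter (fun t => t.2.1 = y)} :=
      { toFun := fun x => ⟨x.val.val, Finset.mem_filter.mpr ⟨x.val.2, x.2⟩⟩
        invFun := fun x => ⟨⟨x.val, (Finset.mem_filter.mp x.2).1⟩, (Finset.mem_filter.mp x.2).2⟩
        left_inv := fun x => rfl
        right_inv := fun x => rfl }
    rw [Fintype.card_congr e, Fintype.card_coe]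
    have hfs : (T \ T').filter (fun t => t.2.1 = y)
        = T.filter (fun t => t.2.1 = y) \ T'.filter (fun t => t.2.1 = y) := by
      ext a
      simp only [Finset.mem_filter, Finset.mem_sdiff]
      tauto
    rw [hfs, Finset.card_sdiff_of_subset (Finset.filter_subset_filter _ hsub), hfilter1]
  set e_fib : ∀ y : Y, Fin ((T.filter (fun t => t.2.1 = y)).card - 1)
      ≃ {t : {t // t ∈ T \ T'} // t.val.2.1 = y} :=
    fun y => (Fintype.equivFinOfCardEq (hfibcard y)).symm with he_fib
  set e_Y : (Σ y : Y, Fin ((T.filter (fun t => t.2.1 = y)).card - 1)) ≃ {t // t ∈ T \ T'} :=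
    (Equiv.sigmaCongrRight e_fib).trans
      (Equiv.sigmaFiberEquiv (fun t : {t // t ∈ T \ T'} => t.val.2.1)) with he_Y
  -- dummy equiv
  have hdcard : Fintype.card {t // t ∈ T \ T'} = p - q := by rw [Fintype.card_coe, hsd]
  set d : {t // t ∈ T \ T'} ≃ Fin (p - q) := Fintype.equivFinOfCardEq hdcard with hd
  -- union equiv
  have hubij : Function.Bijective
      (Sum.elim (fun t : {t // t ∈ T'} => (⟨t.val, hsub t.2⟩ : {t // t ∈ T}))
        (fun t : {t // t ∈ T \ T'} => (⟨t.val, (Finset.mem_sdiff.mp t.2).1⟩ : {t // t ∈ T}))) := by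
    constructor
    · rintro (⟨a, ha⟩ | ⟨a, ha⟩) (⟨b, hb⟩ | ⟨b, hb⟩) h <;>
        simp only [Sum.elim_inl, Sum.elim_inr, Subtype.mk.injEq] at h <;> subst h
      · rfl
      · exact absurd ha (Finset.mem_sdiff.mp hb).2
      · exact absurd hb (Finset.mem_sdiff.mp ha).2
      · rfl
    · rintro ⟨t, ht⟩
      by_cases h : t ∈ T'
      · exact ⟨Sum.inl ⟨t, h⟩, rfl⟩
      · exact ⟨Sum.inr ⟨t, Finset.mem_sdiff.mpr ⟨ht, h⟩⟩, rfl⟩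
  set u : ({t // t ∈ T'} ⊕ {t // t ∈ T \ T'}) ≃ {t // t ∈ T} :=
    Equiv.ofBijective _ hubij with hu
  refine ⟨(Equiv.sumCongr e_Z e_Y).trans u, u.symm.trans (Equiv.sumCongr e_X d),
    ?_, ?_, ?_, ?_, ?_⟩
  · intro z
    exact (Equiv.ofBijective _ hZbij).apply_symm_apply z
  · intro yc
    exact (e_fib yc.1 yc.2).prop
  · intro t x h
    rcases hs : u.symm t with s | s
    · have ht : t = u (Sum.inl s) := by rw [← hs, Equiv.apply_symm_apply]
      simp only [Equiv.trans_apply, hs, Equiv.sumCongr_apply, Sum.map_inl,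
        Sum.inl.injEq] at h
      have hval : t.val = s.val := by rw [ht]; rfl
      rw [hval, ← h]
      rfl
    · simp only [Equiv.trans_apply, hs, Equiv.sumCongr_apply, Sum.map_inr] at h
      exact absurd h (by simp)
  · intro z
    refine ⟨e_X (e_Z z), ?_⟩
    simp [Equiv.trans_apply, Equiv.symm_apply_apply]
  · intro yc
    refine ⟨d (e_Y yc), ?_⟩
    simp [Equiv.trans_apply, Equiv.symm_apply_apply]
end

section
/- Conversely, if in the single-gadget construction there exist compatible perfect matchings M₁ (between Z-nodes ∪ Y-nodes and T-nodes) and M₂ (between T-nodes and X-nodes ∪ dummies) such that every Z-node is routed to an X-node, then the set T' = { M₁(z) : z ∈ Z } is a perfect 3-dimensional matching: |T'| = q and the triples in T' cover each element of X, Y and Z exactly once. -/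
/-- Backward direction of Lemma 2: compatible perfect matchings routing every
`Z`-node to an `X`-node yield a perfect 3-dimensional matching. -/
theorem stmt_13 (X Y Z : Type) [Fintype X] [Fintype Y] [Fintype Z]
    [DecidableEq X] [DecidableEq Y] [DecidableEq Z]
    (q p : ℕ) (hX : Fintype.card X = q) (hY : Fintype.card Y = q) (hZ : Fintype.card Z = q)
    (T : Finset (X × Y × Z)) (hT : T.card = p) (hqp : q ≤ p)
    (hocc : ∀ y : Y, 1 ≤ (T.filter (fun t => t.2.1 = y)).card)
    (M₁ : (Z ⊕ (Σ y : Y, Fin ((T.filter (fun t => t.2.1 = y)).card - 1))) ≃ {t // t ∈ T})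
    (M₂ : {t // t ∈ T} ≃ (X ⊕ Fin (p - q)))
    (hM₁Z : ∀ z : Z, ((M₁ (Sum.inl z)).val).2.2 = z)
    (hM₁Y : ∀ yc : Σ y : Y, Fin ((T.filter (fun t => t.2.1 = y)).card - 1),
        ((M₁ (Sum.inr yc)).val).2.1 = yc.1)
    (hM₂X : ∀ (t : {t // t ∈ T}) (x : X), M₂ t = Sum.inl x → (t.val).1 = x)
    (hroute : ∀ z : Z, ∃ x : X, M₂ (M₁ (Sum.inl z)) = Sum.inl x) :
    (Finset.image (fun z : Z => (M₁ (Sum.inl z)).val) Finset.univ).card = q ∧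
    (∀ x : X, ∃! t, t ∈ Finset.image (fun z : Z => (M₁ (Sum.inl z)).val) Finset.univ ∧ t.1 = x) ∧
    (∀ y : Y, ∃! t, t ∈ Finset.image (fun z : Z => (M₁ (Sum.inl z)).val) Finset.univ ∧ t.2.1 = y) ∧
    (∀ z : Z, ∃! t, t ∈ Finset.image (fun z : Z => (M₁ (Sum.inl z)).val) Finset.univ ∧ t.2.2 = z) := by
  classical
  set f : Z → X × Y × Z := fun z => (M₁ (Sum.inl z)).val with hf
  have hfinj : Function.Injective f := by
    intro z z' h
    have h1 := hM₁Z z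
    have h2 := hM₁Z z'
    rw [← h1, ← h2]
    exact congrArg (fun t => t.2.2) h
  -- X-component map
  have hgx : ∀ z : Z, M₂ (M₁ (Sum.inl z)) = Sum.inl (f z).1 := by
    intro z
    obtain ⟨x, hx⟩ := hroute z
    have := hM₂X _ _ hx
    rw [hx, this]
  have hginj : Function.Injective (fun z : Z => (f z).1) := by
    intro z z' h
    have h' : (f z).1 = (f z').1 := h
    have : M₂ (M₁ (Sum.inl z)) = M₂ (M₁ (Sum.inl z')) := by
      rw [hgx z, hgx z', h']
    exact Sum.inl.inj (M₁.injective (M₂.injective this))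
  have hgsurj : Function.Surjective (fun z : Z => (f z).1) := by
    have : Function.Bijective (fun z : Z => (f z).1) := by
      rw [Fintype.bijective_iff_injective_and_card, hZ, hX]
      exact ⟨hginj, rfl⟩
    exact this.2
  -- Y-component map: at most one z per y
  have hykey : ∀ z z' : Z, (f z).2.1 = (f z').2.1 → z = z' := by
    intro z z' he
    set y := (f z).2.1 with hy
    set m := (T.filter (fun t => t.2.1 = y)).card with hm
    -- injection from {z // (f z).2.1 = y} ⊕ Fin (m-1) into {n // (M₁ n).val.2.1 = y}
    let inj : ({z : Z // (f z).2.1 = y} ⊕ Fin (m - 1)) →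
        {n : Z ⊕ (Σ y : Y, Fin ((T.filter (fun t => t.2.1 = y)).card - 1)) // (M₁ n).val.2.1 = y} :=
      fun a => match a with
        | Sum.inl ⟨z, hz⟩ => ⟨Sum.inl z, by exact hz⟩
        | Sum.inr c => ⟨Sum.inr ⟨y, c⟩, by exact hM₁Y ⟨y, c⟩⟩
    have hinjinj : Function.Injective inj := by
      rintro (⟨a, ha⟩ | a) (⟨b, hb⟩ | b) h <;>
        have h' := congrArg Subtype.val h <;> simp_all [inj]
    have hcard1 : Fintype.card {n : Z ⊕ (Σ y : Y, Fin ((T.filter (fun t => t.2.1 = y)).card - 1)) // (M₁ n).val.2.1 = y} = m := by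
      have e : {n : Z ⊕ (Σ y : Y, Fin ((T.filter (fun t => t.2.1 = y)).card - 1)) // (M₁ n).val.2.1 = y} ≃ {t : {t // t ∈ T} // t.val.2.1 = y} :=
        (Equiv.subtypeEquiv M₁ (fun n => Iff.rfl))
      rw [Fintype.card_congr e]
      have e2 : {t : {t // t ∈ T} // t.val.2.1 = y} ≃ {t : X × Y × Z // t ∈ T ∧ t.2.1 = y} :=
        (Equiv.subtypeSubtypeEquivSubtypeInter (· ∈ T) (fun t => t.2.1 = y))
      rw [Fintype.card_congr e2, hm]
      rw [Fintype.card_subtype]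
      congr 1
      ext t
      simp
    have hle := Fintype.card_le_of_injective inj hinjinj
    rw [Fintype.card_sum, Fintype.card_fin, hcard1] at hle
    have hm1 : 1 ≤ m := hocc y
    have hcZy : Fintype.card {z : Z // (f z).2.1 = y} ≤ 1 := by omega
    have h1 : (⟨z, rfl⟩ : {z : Z // (f z).2.1 = y}) = ⟨z', he.symm⟩ :=
      Fintype.card_le_one_iff.mp hcZy _ _
    exact congrArg Subtype.val h1
  have hysurj : Function.Surjective (fun z : Z => (f z).2.1) := by
    have : Function.Bijective (fun z : Z => (f z).2.1) := by
      rw [Fintype.bijective_iff_injective_and_card, hZ, hY]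
      exact ⟨fun a b h => hykey a b h, rfl⟩
    exact this.2
  refine ⟨?_, ?_, ?_, ?_⟩
  · rw [Finset.card_image_of_injective _ hfinj, Finset.card_univ, hZ]
  · intro x
    obtain ⟨z, hz⟩ := hgsurj x
    refine ⟨f z, ⟨Finset.mem_image_of_mem f (Finset.mem_univ z), hz⟩, ?_⟩
    rintro t ⟨ht, htx⟩
    obtain ⟨z', -, rfl⟩ := Finset.mem_image.mp ht
    have : z' = z := hginj (by simpa [hz] using htx)
    rw [this]
  · intro y
    obtain ⟨z, hz⟩ := hysurj y
    refine ⟨f z, ⟨Finset.mem_image_of_mem f (Finset.mem_univ z), hz⟩, ?_⟩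
    rintro t ⟨ht, hty⟩
    obtain ⟨z', -, rfl⟩ := Finset.mem_image.mp ht
    have : z' = z := hykey z' z (by simpa [hz] using hty)
    rw [this]
  · intro z
    refine ⟨f z, ⟨Finset.mem_image_of_mem f (Finset.mem_univ z), hM₁Z z⟩, ?_⟩
    rintro t ⟨ht, htz⟩
    obtain ⟨z', -, rfl⟩ := Finset.mem_image.mp ht
    have : z' = z := by rw [← hM₁Z z']; exact htz
    rw [this]
end

section
/- For any a, b : Fin n → ℕ, and any permutation τ of Fin n, max_k (a^↓(k) + b^↑(k)) ≤ max_k (a(k) + b(τ(k))), where a^↓ denotes a sorted decreasingly and b^↑ denotes b sorted increasingly. -/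
/-- The oppositely sorted pairing never has a larger bottleneck value than any
other bijective pairing. -/
theorem stmt_14 (n : ℕ) (a b : Fin n → ℕ) (τ : Equiv.Perm (Fin n)) :
    Finset.univ.sup (fun k : Fin n =>
        a (Tuple.sort a (Fin.revPerm k)) + b (Tuple.sort b k)) ≤
      Finset.univ.sup (fun k : Fin n => a k + b (τ k)) := by
  apply Finset.sup_le
  intro k _
  set σa := Tuple.sort a
  set σb := Tuple.sort b
  -- sets of indices
  set A : Finset (Fin n) := (Finset.Ici (Fin.revPerm k)).image σa with hA
  set B : Finset (Fin n) := (Finset.Ici k).image σb with hB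
  have hcardA : A.card = k.val + 1 := by
    rw [hA, Finset.card_image_of_injective _ σa.injective, Fin.card_Ici]
    simp [Fin.revPerm, Fin.rev]
    omega
  have hcardB : B.card = n - k.val := by
    rw [hB, Finset.card_image_of_injective _ σb.injective, Fin.card_Ici]
  have hcardB' : (B.image τ.symm).card = n - k.val := by
    rw [Finset.card_image_of_injective _ τ.symm.injective, hcardB]
  -- intersection nonempty
  have hne : (A ∩ B.image τ.symm).Nonempty := by
    by_contra h
    rw [Finset.not_nonempty_iff_eq_empty] at h
    have := Finset.card_union_of_disjoint (Finset.disjoint_iff_inter_eq_empty.mpr h)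
    have hle : (A ∪ B.image τ.symm).card ≤ n := by
      simpa using Finset.card_le_card (Finset.subset_univ (A ∪ B.image τ.symm))
    rw [this, hcardA, hcardB'] at hle
    have := k.isLt
    omega
  obtain ⟨i, hi⟩ := hne
  rw [Finset.mem_inter] at hi
  obtain ⟨hiA, hiB⟩ := hi
  -- a i ≥ a (σa (rev k))
  obtain ⟨j, hj, hji⟩ := Finset.mem_image.mp hiA
  have ha : a (σa (Fin.revPerm k)) ≤ a i := by
    rw [← hji]
    exact Tuple.monotone_sort a (Finset.mem_Ici.mp hj)
  obtain ⟨m, hm, hmi⟩ := Finset.mem_image.mp hiB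
  obtain ⟨l, hl, hlm⟩ := Finset.mem_image.mp hm
  have hb : b (σb k) ≤ b (τ i) := by
    rw [← hmi, Equiv.apply_symm_apply, ← hlm]
    exact Tuple.monotone_sort b (Finset.mem_Ici.mp hl)
  calc a (σa (Fin.revPerm k)) + b (σb k) ≤ a i + b (τ i) := Nat.add_le_add ha hb
    _ ≤ _ := Finset.le_sup (f := fun k => a k + b (τ k)) (Finset.mem_univ i)
end
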